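/- arXiv:2502.15522 — 3 statements merged into one kernel-verified Lean document; each statement's English description precedes it below -/
import Mathlib

section
/- For all real numbers x in [0,1] and weights w_i ≥ 1 (i = 1,...,n), the inequality 1 - ∑_{i=1}^n w_i x_i ≤ ∏_{i=1}^n (1 - x_i)^{w_i} holds (Weierstrass product inequality). -/
/-! The real-power Bernoulli inequality gives `1 - w x ≤ (1 - x) ^ w` for each factor, and
`1 - (a + b) ≤ (1 - a)(1 - b)` for `a, b ≥ 0` lets these factorwise bounds multiply,
by induction on the number of factors. -/

section OrderedRing

variable {R : Type*} [CommRing R] [LinearOrder R] [IsStrictOrderedRing R]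

lemma one_sub_add_le_mul {a b A B : R} (ha : 0 ≤ a) (hb : 0 ≤ b)
    (hA : 1 - a ≤ A) (hB : 1 - b ≤ B) (hA0 : 0 ≤ A) (hB0 : 0 ≤ B) :
    1 - (a + b) ≤ A * B := by
  rcases le_or_gt a 1 with ha1 | ha1
  · rcases le_or_gt b 1 with hb1 | hb1
    · calc 1 - (a + b) ≤ (1 - a) * (1 - b) := by nlinarith [mul_nonneg ha hb]
        _ ≤ A * B := mul_le_mul hA hB (sub_nonneg.2 hb1) hA0
    · linarith [mul_nonneg hA0 hB0]
  · linarith [mul_nonneg hA0 hB0]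

theorem Finset.one_sub_sum_le_prod {ι : Type*} (s : Finset ι) {f g : ι → R}
    (hf : ∀ i ∈ s, 0 ≤ f i) (hg : ∀ i ∈ s, 0 ≤ g i) (hfg : ∀ i ∈ s, 1 - f i ≤ g i) :
    1 - ∑ i ∈ s, f i ≤ ∏ i ∈ s, g i := by
  induction s using Finset.cons_induction with
  | empty => simp
  | cons a s ha ih =>
    simp only [Finset.forall_mem_cons] at hf hg hfg
    rw [Finset.sum_cons, Finset.prod_cons]
    exact one_sub_add_le_mul hf.1 (Finset.sum_nonneg hf.2) hfg.1 (ih hf.2 hg.2 hfg.2) hg.1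
      (Finset.prod_nonneg hg.2)

end OrderedRing

lemma one_sub_mul_le_one_sub_rpow {x w : ℝ} (hx : x ≤ 1) (hw : 1 ≤ w) :
    1 - w * x ≤ (1 - x) ^ w := by
  have := one_add_mul_self_le_rpow_one_add (neg_le_neg hx) hw
  rw [← sub_eq_add_neg, mul_neg, ← sub_eq_add_neg] at this
  exact this

/-- Weierstrass product inequality: for `x i ∈ [0,1]` and weights `w i ≥ 1`,
`1 - ∑ w i * x i ≤ ∏ (1 - x i) ^ (w i)` (real powers). -/
theorem weierstrass_product_inequality (n : ℕ) (x w : Fin n → ℝ)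
    (hx : ∀ i, x i ∈ Set.Icc (0 : ℝ) 1) (hw : ∀ i, 1 ≤ w i) :
    1 - ∑ i, w i * x i ≤ ∏ i, (1 - x i) ^ (w i) :=
  Finset.univ.one_sub_sum_le_prod
    (fun i _ => mul_nonneg (zero_le_one.trans (hw i)) (hx i).1)
    (fun i _ => Real.rpow_nonneg (sub_nonneg.2 (hx i).2) _)
    (fun i _ => one_sub_mul_le_one_sub_rpow (hx i).2 (hw i))
end

section
/- Let A ∈ ℝ^{m×d} and R ∈ ℝ^{d×s} with orthonormal columns satisfy the restricted isometry property: (1-δ)‖x‖² ≤ ‖Ax‖² ≤ (1+δ)‖x‖² for all x in the range of R, where 0 < δ < 1. Then for any matrix M ∈ ℝ^{d×s} whose columns lie in range(R), every singular value satisfies √(1-δ) σ_j(M) ≤ σ_j(AM) ≤ √(1+δ) σ_j(M) for j = 1,...,s. -/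
open Matrix

/-- Euclidean norm of a finite real vector. -/
noncomputable def evnorm {k : ℕ} (v : Fin k → ℝ) : ℝ :=
  Real.sqrt (∑ i, (v i) ^ 2)

/-- The `j`-th largest singular value of a real matrix, via the Courant–Fischer
min-max characterization: the supremum over `j`-dimensional subspaces `S` of the
infimum of `‖Bv‖` over unit vectors `v ∈ S`. -/
noncomputable def singVal {a b : ℕ} (B : Matrix (Fin a) (Fin b) ℝ) (j : ℕ) : ℝ :=
  sSup {r | ∃ S : Submodule ℝ (Fin b → ℝ), Module.finrank ℝ S = j ∧
    r = sInf {t | ∃ v ∈ S, evnorm v = 1 ∧ t = evnorm (B.mulVec v)}}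

/-! Every `M v` is a combination of the columns of `M`, hence lies in `range R`, so the RIP gives
`√(1-δ) ‖M v‖ ≤ ‖A M v‖ ≤ √(1+δ) ‖M v‖` for every `v`. The min-max value `singVal` is monotone
under pointwise domination `‖B v‖ ≤ ‖C v‖` and positively homogeneous in `B`, which turns these
pointwise bounds into the two singular value bounds. -/

lemma evnorm_eq_norm {k : ℕ} (v : Fin k → ℝ) : evnorm v = ‖WithLp.toLp 2 v‖ := by
  simp [evnorm, EuclideanSpace.norm_eq]

lemma evnorm_nonneg {k : ℕ} (v : Fin k → ℝ) : 0 ≤ evnorm v := Real.sqrt_nonneg _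

lemma evnorm_smul {k : ℕ} (c : ℝ) (v : Fin k → ℝ) : evnorm (c • v) = |c| * evnorm v := by
  simp [evnorm_eq_norm, WithLp.toLp_smul, norm_smul]

open scoped Matrix.Norms.L2Operator in
lemma evnorm_mulVec_le {a b : ℕ} (B : Matrix (Fin a) (Fin b) ℝ) (v : Fin b → ℝ) :
    evnorm (B *ᵥ v) ≤ ‖B‖ * evnorm v := by
  simpa [evnorm_eq_norm] using B.l2_opNorm_mulVec (WithLp.toLp 2 v)

lemma sqrt_mul_evnorm {k : ℕ} (a : ℝ) (v : Fin k → ℝ) :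
    √a * evnorm v = √(a * evnorm v ^ 2) := by
  rw [Real.sqrt_mul' a (sq_nonneg _), Real.sqrt_sq (evnorm_nonneg v)]

noncomputable def unitInf {a b : ℕ} (B : Matrix (Fin a) (Fin b) ℝ)
    (S : Submodule ℝ (Fin b → ℝ)) : ℝ :=
  sInf {t | ∃ v ∈ S, evnorm v = 1 ∧ t = evnorm (B *ᵥ v)}

section
variable {a a' b : ℕ} (B : Matrix (Fin a) (Fin b) ℝ) (S : Submodule ℝ (Fin b → ℝ)) (j : ℕ)

lemma singVal_eq :
    singVal B j = sSup {r | ∃ S : Submodule ℝ (Fin b → ℝ), Module.finrank ℝ S = j ∧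
      r = unitInf B S} := rfl

lemma unitInf_nonneg : 0 ≤ unitInf B S :=
  Real.sInf_nonneg <| by rintro _ ⟨v, -, -, rfl⟩; exact evnorm_nonneg _

lemma unitInf_le {v : Fin b → ℝ} (hv : v ∈ S) (hv1 : evnorm v = 1) :
    unitInf B S ≤ evnorm (B *ᵥ v) :=
  csInf_le ⟨0, by rintro _ ⟨w, -, -, rfl⟩; exact evnorm_nonneg _⟩ ⟨v, hv, hv1, rfl⟩

lemma unitInf_of_not_exists (hS : ¬∃ v ∈ S, evnorm v = 1) : unitInf B S = 0 := by
  have hempty : {t | ∃ v ∈ S, evnorm v = 1 ∧ t = evnorm (B *ᵥ v)} = ∅ :=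
    Set.eq_empty_of_forall_notMem fun _ ⟨v, hv, hv1, _⟩ => hS ⟨v, hv, hv1⟩
  rw [unitInf, hempty, Real.sInf_empty]

open scoped Matrix.Norms.L2Operator in
lemma unitInf_le_norm : unitInf B S ≤ ‖B‖ := by
  by_cases hS : ∃ v ∈ S, evnorm v = 1
  · obtain ⟨v, hv, hv1⟩ := hS
    calc unitInf B S ≤ evnorm (B *ᵥ v) := unitInf_le B S hv hv1
      _ ≤ ‖B‖ := by simpa [hv1] using evnorm_mulVec_le B v
  · simp [unitInf_of_not_exists B S hS]

lemma unitInf_mono {C : Matrix (Fin a') (Fin b) ℝ}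
    (h : ∀ v, evnorm (B *ᵥ v) ≤ evnorm (C *ᵥ v)) : unitInf B S ≤ unitInf C S := by
  by_cases hS : ∃ v ∈ S, evnorm v = 1
  · obtain ⟨v, hv, hv1⟩ := hS
    refine le_csInf ⟨_, v, hv, hv1, rfl⟩ ?_
    rintro _ ⟨w, hw, hw1, rfl⟩
    exact (unitInf_le B S hw hw1).trans (h w)
  · simp [unitInf_of_not_exists _ S hS]

lemma unitInf_smul {c : ℝ} (hc : 0 ≤ c) : unitInf (c • B) S = c * unitInf B S := by
  rw [unitInf, unitInf, ← smul_eq_mul, ← Real.sInf_smul_of_nonneg hc]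
  congr 1
  ext t
  simp [Set.mem_smul_set, smul_mulVec, evnorm_smul, abs_of_nonneg hc, and_assoc, eq_comm]

lemma singVal_nonneg : 0 ≤ singVal B j :=
  Real.sSup_nonneg <| by rintro _ ⟨S, -, rfl⟩; exact unitInf_nonneg B S

open scoped Matrix.Norms.L2Operator in
lemma bddAbove_unitInf_finrank_eq :
    BddAbove {r | ∃ S : Submodule ℝ (Fin b → ℝ), Module.finrank ℝ S = j ∧ r = unitInf B S} :=
  ⟨‖B‖, by rintro _ ⟨S, -, rfl⟩; exact unitInf_le_norm B S⟩

lemma singVal_mono {C : Matrix (Fin a') (Fin b) ℝ}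
    (h : ∀ v, evnorm (B *ᵥ v) ≤ evnorm (C *ᵥ v)) : singVal B j ≤ singVal C j := by
  refine Real.sSup_le ?_ (singVal_nonneg C j)
  rintro _ ⟨S, hS, rfl⟩
  exact (unitInf_mono B S h).trans
    (le_csSup (bddAbove_unitInf_finrank_eq C j) ⟨S, hS, rfl⟩)

lemma singVal_smul {c : ℝ} (hc : 0 ≤ c) : singVal (c • B) j = c * singVal B j := by
  rw [singVal_eq, singVal_eq, ← smul_eq_mul, ← Real.sSup_smul_of_nonneg hc]
  congr 1
  ext r
  simp [Set.mem_smul_set, unitInf_smul B _ hc, eq_comm]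

end

lemma mulVec_mem_range_of_cols {d s s' : ℕ} {M : Matrix (Fin d) (Fin s) ℝ}
    {R : Matrix (Fin d) (Fin s') ℝ}
    (hM : ∀ c : Fin s, ∃ z : Fin s' → ℝ, (fun i => M i c) = R *ᵥ z) (v : Fin s → ℝ) :
    ∃ z, M *ᵥ v = R *ᵥ z := by
  have hcols : Submodule.span ℝ (Set.range Mᵀ) ≤ LinearMap.range R.mulVecLin :=
    Submodule.span_le.2 <| by
      rintro _ ⟨c, rfl⟩
      obtain ⟨z, hz⟩ := hM c
      exact ⟨z, hz.symm⟩
  obtain ⟨z, hz⟩ := hcols (M.range_mulVecLin ▸ LinearMap.mem_range_self M.mulVecLin v)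
  exact ⟨z, hz.symm⟩

theorem rip_singular_value_bounds_general (m d s : ℕ)
    (A : Matrix (Fin m) (Fin d) ℝ) (R : Matrix (Fin d) (Fin s) ℝ)
    (δ : ℝ)
    (hRIP : ∀ x : Fin d → ℝ, (∃ z : Fin s → ℝ, x = R.mulVec z) →
      (1 - δ) * (evnorm x) ^ 2 ≤ (evnorm (A.mulVec x)) ^ 2 ∧
      (evnorm (A.mulVec x)) ^ 2 ≤ (1 + δ) * (evnorm x) ^ 2)
    (M : Matrix (Fin d) (Fin s) ℝ)
    (hM : ∀ c : Fin s, ∃ z : Fin s → ℝ, (fun i => M i c) = R.mulVec z) :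
    ∀ j : ℕ, 1 ≤ j → j ≤ s →
      Real.sqrt (1 - δ) * singVal M j ≤ singVal (A * M) j ∧
      singVal (A * M) j ≤ Real.sqrt (1 + δ) * singVal M j := by
  intro j _ _
  have hbounds (v : Fin s → ℝ) := mulVec_mulVec v A M ▸ hRIP _ (mulVec_mem_range_of_cols hM v)
  have hscale (c : ℝ) (v : Fin s → ℝ) : evnorm ((√c • M) *ᵥ v) = √c * evnorm (M *ᵥ v) := by
    rw [smul_mulVec, evnorm_smul, abs_of_nonneg (Real.sqrt_nonneg c)]
  constructor
  · rw [← singVal_smul M j (Real.sqrt_nonneg _)]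
    refine singVal_mono _ j fun v => ?_
    rw [hscale, sqrt_mul_evnorm, Real.sqrt_le_left (evnorm_nonneg _)]
    exact (hbounds v).1
  · rw [← singVal_smul M j (Real.sqrt_nonneg _)]
    refine singVal_mono _ j fun v => ?_
    rw [hscale, sqrt_mul_evnorm]
    exact Real.le_sqrt_of_sq_le (hbounds v).2

/-- If `A` satisfies the RIP on the range of `R` (a matrix with orthonormal columns)
with constant `0 < δ < 1`, then for any matrix `M` whose columns lie in `range(R)`,
`√(1-δ) σ_j(M) ≤ σ_j(AM) ≤ √(1+δ) σ_j(M)` for `j = 1, …, s`. -/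
theorem rip_singular_value_bounds (m d s : ℕ)
    (A : Matrix (Fin m) (Fin d) ℝ) (R : Matrix (Fin d) (Fin s) ℝ)
    (hR : Rᵀ * R = 1) (δ : ℝ) (hδ0 : 0 < δ) (hδ1 : δ < 1)
    (hRIP : ∀ x : Fin d → ℝ, (∃ z : Fin s → ℝ, x = R.mulVec z) →
      (1 - δ) * (evnorm x) ^ 2 ≤ (evnorm (A.mulVec x)) ^ 2 ∧
      (evnorm (A.mulVec x)) ^ 2 ≤ (1 + δ) * (evnorm x) ^ 2)
    (M : Matrix (Fin d) (Fin s) ℝ)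
    (hM : ∀ c : Fin s, ∃ z : Fin s → ℝ, (fun i => M i c) = R.mulVec z) :
    ∀ j : ℕ, 1 ≤ j → j ≤ s →
      Real.sqrt (1 - δ) * singVal M j ≤ singVal (A * M) j ∧
      singVal (A * M) j ≤ Real.sqrt (1 + δ) * singVal M j :=
  rip_singular_value_bounds_general m d s A R δ hRIP M hM
end

section
/- Let f(W₁,...,W_L) = ‖W_L ⋯ W₁ Y − X‖_F² + λ ∑_{ℓ=1}^L ‖W_ℓ‖_F² with λ > 0, and let P be the orthogonal projection onto range(Y). If (W₁,...,W_L) is a global minimizer of f, then W₁ (I − P) = 0, i.e., the first-layer weights vanish on the orthogonal complement of the range of Y. -/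
open Matrix

/-- `Yd` is the Moore–Penrose pseudoinverse of `Y` (the four Penrose conditions). -/
def IsMoorePenrose {a b : ℕ} (Y : Matrix (Fin a) (Fin b) ℝ)
    (Yd : Matrix (Fin b) (Fin a) ℝ) : Prop :=
  Y * Yd * Y = Y ∧ Yd * Y * Yd = Yd ∧ (Y * Yd)ᵀ = Y * Yd ∧ (Yd * Y)ᵀ = Yd * Y

/-- Squared Frobenius norm. -/
noncomputable def frobSq {a b : ℕ} (A : Matrix (Fin a) (Fin b) ℝ) : ℝ :=
  ∑ i, ∑ j, (A i j) ^ 2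

/-- Product of the first `ℓ` layers of a linear network:
`netProd dims W ℓ = W_{ℓ} ⋯ W_1` (0-indexed layers). -/
def netProd (dims : ℕ → ℕ)
    (W : ∀ ℓ : ℕ, Matrix (Fin (dims (ℓ + 1))) (Fin (dims ℓ)) ℝ) :
    (ℓ : ℕ) → Matrix (Fin (dims ℓ)) (Fin (dims 0)) ℝ
  | 0 => 1
  | ℓ + 1 => W ℓ * netProd dims W ℓ

/-! Replacing the first layer `W₁` by `W₁P`, where `P = YY†` is the orthogonal projection onto
`range Y`, does not change `W_L ⋯ W₁ Y` because `PY = Y`, while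
`‖W₁‖² = ‖W₁P‖² + ‖W₁(1 - P)‖²`. Minimality therefore forces `λ ‖W₁(1 - P)‖² ≤ 0`. -/

lemma frobSq_nonneg {a b : ℕ} (A : Matrix (Fin a) (Fin b) ℝ) : 0 ≤ frobSq A :=
  Finset.sum_nonneg fun _ _ => Finset.sum_nonneg fun _ _ => sq_nonneg _

lemma frobSq_eq_zero_iff {a b : ℕ} {A : Matrix (Fin a) (Fin b) ℝ} : frobSq A = 0 ↔ A = 0 := by
  rw [frobSq, Fintype.sum_eq_zero_iff_of_nonneg fun i =>
    Finset.sum_nonneg fun j _ => sq_nonneg (A i j)]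
  simp only [funext_iff, Pi.zero_apply, Fintype.sum_eq_zero_iff_of_nonneg fun _ => sq_nonneg _,
    sq_eq_zero_iff]
  exact ⟨fun h => Matrix.ext h, fun h i j => by simp [h]⟩

/-- The row-wise cross terms of `‖A + B‖²` are the diagonal entries of `A * Bᵀ`. -/
lemma frobSq_add_of_mul_transpose_eq_zero {a b : ℕ} {A B : Matrix (Fin a) (Fin b) ℝ}
    (h : A * Bᵀ = 0) : frobSq (A + B) = frobSq A + frobSq B := by
  have hcross : ∀ i, ∑ j, A i j * B i j = 0 := fun i => by
    simpa [Matrix.mul_apply] using congrFun (congrFun h i) i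
  simp only [frobSq, ← Finset.sum_add_distrib]
  refine Finset.sum_congr rfl fun i _ => ?_
  calc ∑ j, (A + B) i j ^ 2 = ∑ j, (A i j ^ 2 + B i j ^ 2) + 2 * ∑ j, A i j * B i j := by
        simp only [Matrix.add_apply, Finset.mul_sum, ← Finset.sum_add_distrib]
        exact Finset.sum_congr rfl fun j _ => by ring
    _ = ∑ j, (A i j ^ 2 + B i j ^ 2) := by rw [hcross, mul_zero, add_zero]

lemma frobSq_eq_frobSq_mul_add_frobSq_mul_one_sub {a b : ℕ} {P : Matrix (Fin b) (Fin b) ℝ}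
    (hP : IsIdempotentElem P) (hPs : P.IsSymm) (A : Matrix (Fin a) (Fin b) ℝ) :
    frobSq A = frobSq (A * P) + frobSq (A * (1 - P)) := by
  have hsymm : (1 - P)ᵀ = 1 - P := by rw [Matrix.transpose_sub, Matrix.transpose_one, hPs.eq]
  have horth : A * P * (A * (1 - P))ᵀ = 0 := by
    rw [Matrix.transpose_mul, hsymm, Matrix.mul_assoc, ← Matrix.mul_assoc P,
      hP.mul_one_sub_self, Matrix.zero_mul, Matrix.mul_zero]
  rw [← frobSq_add_of_mul_transpose_eq_zero horth, ← Matrix.mul_add, add_sub_cancel,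
    Matrix.mul_one]

namespace IsMoorePenrose

variable {a b : ℕ} {Y : Matrix (Fin a) (Fin b) ℝ} {Yd : Matrix (Fin b) (Fin a) ℝ}

lemma isIdempotentElem_mul (h : IsMoorePenrose Y Yd) : IsIdempotentElem (Y * Yd) := by
  rw [IsIdempotentElem, ← Matrix.mul_assoc, h.1]

lemma isSymm_mul (h : IsMoorePenrose Y Yd) : (Y * Yd).IsSymm := h.2.2.1

end IsMoorePenrose

section LinearNetwork

variable {dims : ℕ → ℕ}

lemma netProd_mul_eq_of_first_layer_mul_eq {m : ℕ} {Y : Matrix (Fin (dims 0)) (Fin m) ℝ}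
    {W W' : ∀ ℓ : ℕ, Matrix (Fin (dims (ℓ + 1))) (Fin (dims ℓ)) ℝ}
    (h0 : W' 0 * Y = W 0 * Y) (hne : ∀ ℓ, ℓ ≠ 0 → W' ℓ = W ℓ) (ℓ : ℕ) :
    netProd dims W' ℓ * Y = netProd dims W ℓ * Y := by
  induction ℓ with
  | zero => rfl
  | succ ℓ ih =>
    simp only [netProd, Matrix.mul_assoc, ih]
    rcases eq_or_ne ℓ 0 with rfl | hℓ
    · simpa [netProd] using h0
    · rw [hne ℓ hℓ]

lemma sum_frobSq_update_add {s : Finset ℕ} {i : ℕ} (hi : i ∈ s)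
    (W : ∀ ℓ : ℕ, Matrix (Fin (dims (ℓ + 1))) (Fin (dims ℓ)) ℝ)
    (M : Matrix (Fin (dims (i + 1))) (Fin (dims i)) ℝ) :
    ∑ ℓ ∈ s, frobSq (Function.update W i M ℓ) + frobSq (W i) =
      ∑ ℓ ∈ s, frobSq (W ℓ) + frobSq M := by
  simp only [Function.apply_update (fun ℓ => @frobSq (dims (ℓ + 1)) (dims ℓ)),
    Finset.sum_update_of_mem hi,
    Finset.sum_eq_add_sum_sdiff_singleton_of_mem hi fun ℓ => frobSq (W ℓ)]
  ring

end LinearNetwork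

/-- A global minimizer of the `ℓ₂`-regularized loss
`‖W_L ⋯ W_1 Y − X‖_F² + λ ∑ ‖W_ℓ‖_F²` (with `λ > 0`) has first-layer weights
vanishing on the orthogonal complement of `range(Y)`: `W₁ (I − YY†) = 0`. -/
theorem global_min_vanishes_off_rangeY (L : ℕ) (hL : 1 ≤ L) (dims : ℕ → ℕ) (n : ℕ)
    (Y : Matrix (Fin (dims 0)) (Fin n) ℝ) (X : Matrix (Fin (dims L)) (Fin n) ℝ)
    (lam : ℝ) (hlam : 0 < lam)
    (Yd : Matrix (Fin n) (Fin (dims 0)) ℝ) (hYd : IsMoorePenrose Y Yd)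
    (W : ∀ ℓ : ℕ, Matrix (Fin (dims (ℓ + 1))) (Fin (dims ℓ)) ℝ)
    (hmin : ∀ W' : ∀ ℓ : ℕ, Matrix (Fin (dims (ℓ + 1))) (Fin (dims ℓ)) ℝ,
      frobSq (netProd dims W L * Y - X) + lam * ∑ ℓ ∈ Finset.range L, frobSq (W ℓ) ≤
      frobSq (netProd dims W' L * Y - X) + lam * ∑ ℓ ∈ Finset.range L, frobSq (W' ℓ)) :
    W 0 * (1 - Y * Yd) = 0 := by
  set P := Y * Yd
  set W' := Function.update W 0 (W 0 * P)
  have hfit : netProd dims W' L * Y = netProd dims W L * Y :=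
    netProd_mul_eq_of_first_layer_mul_eq
      (by simp only [W', Function.update_self, Matrix.mul_assoc, P, hYd.1])
      (fun ℓ hℓ => Function.update_of_ne hℓ _ _) L
  have hreg : ∑ ℓ ∈ Finset.range L, frobSq (W' ℓ) + frobSq (W 0 * (1 - P)) =
      ∑ ℓ ∈ Finset.range L, frobSq (W ℓ) := by
    have := sum_frobSq_update_add (Finset.mem_range.mpr hL) W (W 0 * P)
    rw [frobSq_eq_frobSq_mul_add_frobSq_mul_one_sub hYd.isIdempotentElem_mul hYd.isSymm_mul
      (W 0)] at this
    linarith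
  have hle := hmin W'
  rw [hfit, ← hreg] at hle
  have hoff_nonpos : frobSq (W 0 * (1 - P)) ≤ 0 := by nlinarith
  exact frobSq_eq_zero_iff.mp (le_antisymm hoff_nonpos (frobSq_nonneg _))
end
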